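/- Let A be a Hopf algebra, B a left coideal subalgebra, and R a right ideal of B⁺ with canonical projection p : B⁺ → B⁺/R. Then there is a unique equivariant derivation δ_R of B such that a·δ_R(b) = a b₍₁₎ ⊗ p(b₍₂₎ − ε(b₍₂₎)1) for all a, b ∈ B, where the bimodule Γ(δ_R) ⊆ A ⊗ B⁺/R carries the left action c·(a δb) = (ca) δb and the right action (a δb)·c = a δ(bc) − ab δc. -/

import Mathlib

open TensorProduct

noncomputable section

/-- A derivation of an algebra `B` into a `B`-bimodule `M`, the bimodule
structure being given by commuting unital left and right actions. -/
structure BimodDeriv (B M : Type) [Ring B] [Algebra ℂ B]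
    [AddCommGroup M] [Module ℂ M] where
  l : B →ₗ[ℂ] M →ₗ[ℂ] M
  r : B →ₗ[ℂ] M →ₗ[ℂ] M
  l_mul : ∀ a b m, l (a * b) m = l a (l b m)
  l_one : ∀ m, l 1 m = m
  r_mul : ∀ a b m, r (a * b) m = r b (r a m)
  r_one : ∀ m, r 1 m = m
  lr_comm : ∀ a b m, l a (r b m) = r b (l a m)
  d : B →ₗ[ℂ] M
  leibniz : ∀ a b, d (a * b) = l a (d b) + r b (d a)

variable (A : Type) [Ring A] [HopfAlgebra ℂ A] (B : Subalgebra ℂ A)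

/-- The counit of `A` restricted to the subalgebra `B`. -/
def epsB : ↥B →ₐ[ℂ] ℂ := (Bialgebra.counitAlgHom ℂ A).comp B.val

/-- `B⁺ = B ∩ ker ε`. -/
def Bplus : Submodule ℂ ↥B := LinearMap.ker (epsB A B).toLinearMap

/-- `b ↦ b⁺ = b − ε(b)1` on `B`. -/
def plusB : ↥B →ₗ[ℂ] ↥B :=
  LinearMap.id - (Algebra.linearMap ℂ ↥B).comp (epsB A B).toLinearMap

lemma plusB_mem (b : ↥B) : plusB A B b ∈ Bplus A B := by
  simp [plusB, Bplus, epsB, Algebra.algebraMap_eq_smul_one]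

/-- `b ↦ b⁺` viewed as a map into `B⁺`. -/
def plusBc : ↥B →ₗ[ℂ] ↥(Bplus A B) :=
  (plusB A B).codRestrict (Bplus A B) (plusB_mem A B)

variable (comulB : ↥B →ₗ[ℂ] A ⊗[ℂ] ↥B)

/-- The Sweedler-type map `a ⊗ b ↦ a₍₁₎b₍₁₎ ⊗ a₍₂₎·δ(b₍₂₎)` attached to a
derivation `δ` of the left coideal subalgebra `B`. -/
def sweedlerMap {M : Type} [AddCommGroup M] [Module ℂ M]
    (δ : BimodDeriv ↥B M) : ↥B ⊗[ℂ] ↥B →ₗ[ℂ] A ⊗[ℂ] M :=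
  (TensorProduct.map (LinearMap.mul' ℂ A)
      (TensorProduct.lift
        (LinearMap.mk₂ ℂ (fun a b => δ.l a (δ.d b))
          (fun a a' b => by simp)
          (fun c a b => by simp)
          (fun a b b' => by simp)
          (fun c a b => by simp)))) ∘ₗ
    (TensorProduct.tensorTensorTensorComm ℂ A ↥B A ↥B).toLinearMap ∘ₗ
    (TensorProduct.map comulB comulB)

/-- Equivariance (covariance) of a derivation `δ` of a left coideal
subalgebra `B` of `A`: the assignment `a·δb ↦ a₍₁₎b₍₁₎ ⊗ a₍₂₎·δb₍₂₎` is
well-defined on `Γ(δ)`. -/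
def IsEquivariant {M : Type} [AddCommGroup M] [Module ℂ M]
    (δ : BimodDeriv ↥B M) : Prop :=
  ∀ L : List (↥B × ↥B),
    (L.map fun p => δ.l p.1 (δ.d p.2)).sum = 0 →
    (L.map fun p => sweedlerMap A B comulB δ (p.1 ⊗ₜ[ℂ] p.2)).sum = 0

end

/-! The corestricted coproduct `Δ_B : B → A ⊗ B` is multiplicative, counital and coassociative.
Right multiplication makes `Q = B⁺/R` a right `B`-module (because `R B⁺ ⊆ R` and
`x b = x b⁺ + ε(b) x`), and `p(b) = [b⁺]` satisfies `p(xy) = p(x)·y + ε(x) p(y)`. Hence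
`δ = (id ⊗ p) ∘ Δ_B` is a derivation into `A ⊗ Q`, with `B` acting on the left by multiplication on
the first leg and on the right by `(t ⊗ q)·b = t b₍₁₎ ⊗ q·b₍₂₎`, and `a δb = a b₍₁₎ ⊗ p(b₍₂₎)`.
By coassociativity `a₍₁₎b₍₁₎ ⊗ a₍₂₎ δb₍₂₎ = (Δ ⊗ id)(a δb)`, which is linear in `a δb`:
this is equivariance. Uniqueness holds because the formula prescribes every `a δb`. -/

open LinearMap

section TensorAction

variable {R A B M N : Type*} [CommRing R] [Ring A] [Algebra R A] [Ring B] [Algebra R B]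
  [AddCommGroup M] [Module R M] [AddCommGroup N] [Module R N]

def tensorAction (f : A →ₗ[R] Module.End R M) (g : B →ₗ[R] Module.End R N) :
    A ⊗[R] B →ₗ[R] Module.End R (M ⊗[R] N) :=
  homTensorHomMap (RingHom.id R) M N M N ∘ₗ map f g

@[simp] lemma tensorAction_tmul (f : A →ₗ[R] Module.End R M) (g : B →ₗ[R] Module.End R N)
    (a : A) (b : B) : tensorAction f g (a ⊗ₜ b) = map (f a) (g b) := by
  simp [tensorAction]

lemma tensorAction_mul_of_anti {f : A →ₗ[R] Module.End R M} {g : B →ₗ[R] Module.End R N}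
    (hf : ∀ a a', f (a * a') = f a' * f a) (hg : ∀ b b', g (b * b') = g b' * g b)
    (u v : A ⊗[R] B) : tensorAction f g (u * v) = tensorAction f g v * tensorAction f g u := by
  induction u using TensorProduct.induction_on with
  | zero => simp
  | add u₁ u₂ h₁ h₂ => simp only [add_mul, mul_add, map_add, h₁, h₂]
  | tmul a b =>
    induction v using TensorProduct.induction_on with
    | zero => simp
    | add v₁ v₂ h₁ h₂ => simp only [add_mul, mul_add, map_add, h₁, h₂]
    | tmul a' b' =>
      simp only [Algebra.TensorProduct.tmul_mul_tmul, tensorAction_tmul, hf, hg,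
        Module.End.mul_eq_comp, map_comp]

lemma tensorAction_one {f : A →ₗ[R] Module.End R M} {g : B →ₗ[R] Module.End R N}
    (hf : f 1 = 1) (hg : g 1 = 1) : tensorAction f g 1 = 1 := by
  rw [Algebra.TensorProduct.one_def, tensorAction_tmul, hf, hg]
  exact map_id

variable (R) in
lemma mul_flip_mul (s t : A) : (mul R A).flip (s * t) = (mul R A).flip t * (mul R A).flip s :=
  LinearMap.ext fun x => (mul_assoc x s t).symm

lemma tensorAction_mul_flip_smul_comm (ρ : B →ₗ[R] Module.End R N) (u : A ⊗[R] B) (s : A)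
    (m : A ⊗[R] N) :
    tensorAction (mul R A).flip ρ u (s • m) = s • tensorAction (mul R A).flip ρ u m := by
  induction u using TensorProduct.induction_on with
  | zero => simp
  | add u₁ u₂ h₁ h₂ => simp only [map_add, LinearMap.add_apply, smul_add, h₁, h₂]
  | tmul t x =>
    induction m using TensorProduct.induction_on with
    | zero => simp
    | add m₁ m₂ h₁ h₂ => simp only [map_add, smul_add, h₁, h₂]
    | tmul t' q => simp [smul_tmul', mul_assoc]

lemma map_mulLeft_apply (s : A) (f : M →ₗ[R] N) (u : A ⊗[R] M) :
    map (mulLeft R s) f u = s • lTensor A f u := by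
  induction u using TensorProduct.induction_on with
  | zero => simp
  | add u₁ u₂ h₁ h₂ => simp only [map_add, smul_add, h₁, h₂]
  | tmul t m => simp [smul_tmul']

lemma lTensor_mul_of_twisted_derivation {ρ : B →ₗ[R] Module.End R N} {ε : B →ₐ[R] R}
    {p : B →ₗ[R] N} (hp : ∀ x y, p (x * y) = ρ y (p x) + ε x • p y) (u v : A ⊗[R] B) :
    lTensor A p (u * v) = tensorAction (mul R A).flip ρ v (lTensor A p u)
      + TensorProduct.rid R A (lTensor A ε.toLinearMap u) • lTensor A p v := by
  induction u using TensorProduct.induction_on with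
  | zero => simp
  | add u₁ u₂ h₁ h₂ => simp only [add_mul, map_add, add_smul, h₁, h₂]; abel
  | tmul s x =>
    induction v using TensorProduct.induction_on with
    | zero => simp
    | add v₁ v₂ h₁ h₂ =>
      simp only [mul_add, map_add, smul_add, LinearMap.add_apply, h₁, h₂]; abel
    | tmul t y =>
      simp only [Algebra.TensorProduct.tmul_mul_tmul, lTensor_tmul, hp, tmul_add,
        tensorAction_tmul, map_tmul, rid_tmul, smul_tmul', AlgHom.toLinearMap_apply]
      rw [flip_apply, mul_apply', smul_eq_mul, smul_mul_assoc, tmul_smul, smul_tmul']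

end TensorAction

section CofreeCoaction

variable {R A : Type*} [CommRing R] [Ring A] [Bialgebra R A]

variable (R A) in
def cofreeCoaction (Q : Type*) [AddCommGroup Q] [Module R Q] :
    A ⊗[R] Q →ₗ[R] A ⊗[R] (A ⊗[R] Q) :=
  (TensorProduct.assoc R A A Q).toLinearMap ∘ₗ rTensor Q Coalgebra.comul

variable (R A) in
abbrev tensorSMul (N : Type*) [AddCommGroup N] [Module R N] [Module A N] [IsScalarTower R A N] :
    A ⊗[R] A →ₗ[R] Module.End R (A ⊗[R] N) :=
  tensorAction (mul R A) (Algebra.lsmul R R N).toLinearMap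

lemma assoc_mul_tmul {Q : Type*} [AddCommGroup Q] [Module R Q] (z z' : A ⊗[R] A) (q : Q) :
    TensorProduct.assoc R A A Q ((z * z') ⊗ₜ q)
      = tensorSMul R A (A ⊗[R] Q) z (TensorProduct.assoc R A A Q (z' ⊗ₜ q)) := by
  induction z using TensorProduct.induction_on with
  | zero => simp
  | add z₁ z₂ h₁ h₂ => simp only [add_mul, add_tmul, map_add, LinearMap.add_apply, h₁, h₂]
  | tmul s t =>
    induction z' using TensorProduct.induction_on with
    | zero => simp
    | add z₁ z₂ h₁ h₂ => simp only [mul_add, add_tmul, map_add, h₁, h₂]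
    | tmul s' t' => simp [smul_tmul']

lemma cofreeCoaction_smul {Q : Type*} [AddCommGroup Q] [Module R Q] (s : A) (m : A ⊗[R] Q) :
    cofreeCoaction R A Q (s • m)
      = tensorSMul R A (A ⊗[R] Q) (Coalgebra.comul s) (cofreeCoaction R A Q m) := by
  induction m using TensorProduct.induction_on with
  | zero => simp
  | add m₁ m₂ h₁ h₂ => simp only [smul_add, map_add, h₁, h₂]
  | tmul t q =>
    simp only [cofreeCoaction, smul_tmul', smul_eq_mul, comp_apply, rTensor_tmul,
      Bialgebra.comul_mul, LinearEquiv.coe_coe, assoc_mul_tmul]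

lemma map_mul'_tensorTensorTensorComm {B : Subalgebra R A} {N : Type*} [AddCommGroup N]
    [Module R N] [Module A N] [IsScalarTower R A N] {d : B →ₗ[R] N} {G : B ⊗[R] B →ₗ[R] N}
    (hG : ∀ y x, G (y ⊗ₜ x) = (y : A) • d x) (u v : A ⊗[R] B) :
    map (mul' R A) G (tensorTensorTensorComm R A B A B (u ⊗ₜ v))
      = tensorSMul R A N (lTensor A B.val.toLinearMap u) (lTensor A d v) := by
  -- `rw` rather than `simp`: instance search for `map_zero` on this linear equivalence times out
  induction u using TensorProduct.induction_on with
  | zero => rw [zero_tmul, LinearEquiv.map_zero, map_zero, map_zero, map_zero, LinearMap.zero_apply]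
  | add u₁ u₂ h₁ h₂ => simp only [add_tmul, map_add, LinearMap.add_apply, h₁, h₂]
  | tmul t y =>
    induction v using TensorProduct.induction_on with
    | zero => rw [tmul_zero, LinearEquiv.map_zero, map_zero, map_zero, map_zero]
    | add v₁ v₂ h₁ h₂ => simp only [tmul_add, map_add, h₁, h₂]
    | tmul s x => simp [hG]

end CofreeCoaction

lemma Subalgebra.lTensor_val_injective {K A : Type*} [Field K] [Ring A] [Algebra K A]
    (B : Subalgebra K A) (C : Type*) [AddCommGroup C] [Module K C] :
    Function.Injective (lTensor C B.val.toLinearMap) :=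
  Module.Flat.lTensor_preserves_injective_linearMap _ Subtype.val_injective

section Coaction

variable {A : Type} [Ring A] [HopfAlgebra ℂ A] {B : Subalgebra ℂ A}

def IsCorestrictedComul (comulB : B →ₗ[ℂ] A ⊗[ℂ] B) : Prop :=
  ∀ b : B, lTensor A B.val.toLinearMap (comulB b) = Coalgebra.comul (b : A)

namespace IsCorestrictedComul

variable {comulB : B →ₗ[ℂ] A ⊗[ℂ] B}

lemma lTensor_val_comp (hc : IsCorestrictedComul comulB) :
    lTensor A B.val.toLinearMap ∘ₗ comulB = Coalgebra.comul ∘ₗ B.val.toLinearMap :=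
  LinearMap.ext hc

lemma map_one (hc : IsCorestrictedComul comulB) : comulB 1 = 1 := by
  apply B.lTensor_val_injective A
  rw [hc, B.coe_one, Bialgebra.comul_one]
  rfl

lemma map_mul (hc : IsCorestrictedComul comulB) (x y : B) :
    comulB (x * y) = comulB x * comulB y := by
  have hval : lTensor A B.val.toLinearMap
      = (Algebra.TensorProduct.map (AlgHom.id ℂ A) B.val).toLinearMap :=
    TensorProduct.ext' fun _ _ => rfl
  apply B.lTensor_val_injective A
  rw [hc, B.coe_mul, Bialgebra.comul_mul, ← hc, ← hc, hval]
  exact (_root_.map_mul (Algebra.TensorProduct.map (AlgHom.id ℂ A) B.val) _ _).symm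

lemma rid_lTensor_epsB (hc : IsCorestrictedComul comulB) (b : B) :
    TensorProduct.rid ℂ A (lTensor A (epsB A B).toLinearMap (comulB b)) = b := by
  have : (epsB A B).toLinearMap = Coalgebra.counit ∘ₗ B.val.toLinearMap := rfl
  rw [this, lTensor_comp, comp_apply, hc, Coalgebra.lTensor_counit_comul]
  simp

lemma coassoc (hc : IsCorestrictedComul comulB) (b : B) :
    lTensor A comulB (comulB b)
      = TensorProduct.assoc ℂ A A B (rTensor B Coalgebra.comul (comulB b)) := by
  apply Module.Flat.lTensor_preserves_injective_linearMap _ (B.lTensor_val_injective A)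
  have hnat : lTensor A (lTensor A B.val.toLinearMap) ∘ₗ (TensorProduct.assoc ℂ A A B).toLinearMap
      = (TensorProduct.assoc ℂ A A A).toLinearMap ∘ₗ lTensor (A ⊗[ℂ] A) B.val.toLinearMap :=
    TensorProduct.ext_threefold fun _ _ _ => rfl
  rw [← comp_apply (lTensor A _), ← lTensor_comp, hc.lTensor_val_comp, lTensor_comp, comp_apply,
    hc, ← Coalgebra.coassoc_apply]
  have := DFunLike.congr_fun hnat (rTensor B Coalgebra.comul (comulB b))
  simp only [comp_apply, LinearEquiv.coe_coe] at this
  rw [this, ← comp_apply (lTensor _ _), lTensor_comp_rTensor, ← rTensor_comp_lTensor, comp_apply,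
    hc]

lemma cofreeCoaction_lTensor (hc : IsCorestrictedComul comulB) {Q : Type} [AddCommGroup Q]
    [Module ℂ Q] (p : B →ₗ[ℂ] Q) (b : B) :
    cofreeCoaction ℂ A Q (lTensor A p (comulB b))
      = lTensor A (lTensor A p ∘ₗ comulB) (comulB b) := by
  have hassoc : (TensorProduct.assoc ℂ A A Q).toLinearMap ∘ₗ lTensor (A ⊗[ℂ] A) p
      = lTensor A (lTensor A p) ∘ₗ (TensorProduct.assoc ℂ A A B).toLinearMap :=
    TensorProduct.ext_threefold fun _ _ _ => rfl
  have hnat : cofreeCoaction ℂ A Q ∘ₗ lTensor A p = lTensor A (lTensor A p) ∘ₗ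
      (TensorProduct.assoc ℂ A A B).toLinearMap ∘ₗ rTensor B Coalgebra.comul := by
    rw [cofreeCoaction, comp_assoc, rTensor_comp_lTensor, ← lTensor_comp_rTensor, ← comp_assoc,
      hassoc, comp_assoc]
  rw [← comp_apply (cofreeCoaction ℂ A Q), hnat, comp_apply, comp_apply, LinearEquiv.coe_coe,
    ← hc.coassoc, lTensor_comp, comp_apply]

end IsCorestrictedComul

end Coaction

section CoactionDerivation

variable {A : Type} [Ring A] [HopfAlgebra ℂ A] {B : Subalgebra ℂ A} {comulB : B →ₗ[ℂ] A ⊗[ℂ] B}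
  (hc : IsCorestrictedComul comulB) {Q : Type} [AddCommGroup Q] [Module ℂ Q]
  (ρ : B →ₗ[ℂ] Module.End ℂ Q) (hρ_mul : ∀ x y, ρ (x * y) = ρ y * ρ x) (hρ_one : ρ 1 = 1)
  (p : B →ₗ[ℂ] Q) (hp : ∀ x y, p (x * y) = ρ y (p x) + epsB A B x • p y)

def coactionDeriv : BimodDeriv B (A ⊗[ℂ] Q) where
  l := (Algebra.lsmul ℂ ℂ (A ⊗[ℂ] Q)).toLinearMap ∘ₗ B.val.toLinearMap
  r := tensorAction (mul ℂ A).flip ρ ∘ₗ comulB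
  l_mul a b m := by simp
  l_one m := by simp
  r_mul a b m := by
    simp only [comp_apply, hc.map_mul,
      tensorAction_mul_of_anti (f := (mul ℂ A).flip) (mul_flip_mul ℂ) hρ_mul]
    rfl
  r_one m := by
    simp only [comp_apply, hc.map_one,
      tensorAction_one (f := (mul ℂ A).flip) (LinearMap.ext mul_one) hρ_one]
    rfl
  lr_comm a b m := (tensorAction_mul_flip_smul_comm ρ (comulB b) (a : A) m).symm
  d := lTensor A p ∘ₗ comulB
  leibniz a b := by
    simp only [comp_apply, hc.map_mul, lTensor_mul_of_twisted_derivation hp, hc.rid_lTensor_epsB]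
    exact add_comm _ _

lemma sweedlerMap_coactionDeriv (a b : B) :
    let δ := coactionDeriv hc ρ hρ_mul hρ_one p hp
    sweedlerMap A B comulB δ (a ⊗ₜ b) = cofreeCoaction ℂ A Q (δ.l a (δ.d b)) := by
  intro δ
  calc sweedlerMap A B comulB δ (a ⊗ₜ b)
      = tensorSMul ℂ A (A ⊗[ℂ] Q) (lTensor A B.val.toLinearMap (comulB a))
          (lTensor A (lTensor A p ∘ₗ comulB) (comulB b)) :=
        map_mul'_tensorTensorTensorComm (fun _ _ => rfl) _ _
    _ = tensorSMul ℂ A (A ⊗[ℂ] Q) (Coalgebra.comul (a : A))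
          (cofreeCoaction ℂ A Q (lTensor A p (comulB b))) := by
        rw [hc a, hc.cofreeCoaction_lTensor]
    _ = cofreeCoaction ℂ A Q (δ.l a (δ.d b)) := (cofreeCoaction_smul _ _).symm

lemma isEquivariant_coactionDeriv :
    IsEquivariant A B comulB (coactionDeriv hc ρ hρ_mul hρ_one p hp) := by
  intro L hL
  have := congrArg (cofreeCoaction ℂ A Q) hL
  rw [map_list_sum, List.map_map, map_zero] at this
  simpa only [sweedlerMap_coactionDeriv, Function.comp_def] using this

end CoactionDerivation

section RightIdealQuotient

variable {A : Type} [Ring A] [HopfAlgebra ℂ A] {B : Subalgebra ℂ A}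

lemma plusB_mul (x y : B) :
    plusB A B (x * y) = plusB A B x * y + epsB A B x • plusB A B y := by
  simp only [plusB, LinearMap.sub_apply, id_apply, comp_apply, AlgHom.toLinearMap_apply,
    Algebra.linearMap_apply, _root_.map_mul, Algebra.algebraMap_eq_smul_one, sub_mul,
    smul_mul_assoc, one_mul, smul_sub, smul_smul]
  abel

lemma mul_mem_Bplus {x : B} (hx : x ∈ Bplus A B) (b : B) : x * b ∈ Bplus A B := by
  simp_all [Bplus]

variable (A B) in
def bplusMulRight : B →ₗ[ℂ] Module.End ℂ (Bplus A B) where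
  toFun b := ((mul ℂ B).flip b).restrict fun _ hx => mul_mem_Bplus hx b
  map_add' b b' := LinearMap.ext fun x => Subtype.ext (mul_add (x : B) b b')
  map_smul' c b := LinearMap.ext fun x => Subtype.ext (mul_smul_comm c (x : B) b)

@[simp] lemma bplusMulRight_apply_coe (b : B) (x : Bplus A B) :
    (bplusMulRight A B b x : B) = x * b := rfl

variable {R : Submodule ℂ B}

lemma mul_mem_of_forall_mul_Bplus_mem (hR : ∀ x ∈ R, ∀ b ∈ Bplus A B, x * b ∈ R) {x : B}
    (hx : x ∈ R) (b : B) : x * b ∈ R := by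
  have hsplit : x * b = x * plusB A B b + epsB A B b • x := by
    simp [plusB, Algebra.algebraMap_eq_smul_one, mul_sub]
  rw [hsplit]
  exact R.add_mem (hR x hx _ (plusB_mem A B b)) (R.smul_mem _ hx)

variable (A B R) in
abbrev BplusQuot := Bplus A B ⧸ R.comap (Bplus A B).subtype

variable (hR : ∀ x ∈ R, ∀ b ∈ Bplus A B, x * b ∈ R)

def bplusQuotMulRight : B →ₗ[ℂ] Module.End ℂ (BplusQuot A B R) :=
  Submodule.mapQLinear _ _ ∘ₗ (bplusMulRight A B).codRestrict (Submodule.compatibleMaps _ _)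
    fun b _ hx => mul_mem_of_forall_mul_Bplus_mem hR hx b

@[simp] lemma bplusQuotMulRight_mk (b : B) (x : Bplus A B) :
    bplusQuotMulRight hR b (Submodule.Quotient.mk x)
      = Submodule.Quotient.mk (bplusMulRight A B b x) :=
  rfl

lemma bplusQuotMulRight_mul (x y : B) :
    bplusQuotMulRight hR (x * y) = bplusQuotMulRight hR y * bplusQuotMulRight hR x := by
  ext z
  simp only [comp_apply, Submodule.mkQ_apply, bplusQuotMulRight_mk, Module.End.mul_apply]
  congr 1
  ext
  simp [mul_assoc]

lemma bplusQuotMulRight_one : bplusQuotMulRight hR 1 = 1 := by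
  ext z
  simp only [comp_apply, Submodule.mkQ_apply, bplusQuotMulRight_mk, Module.End.one_apply]
  congr 1
  ext
  simp

variable (A B R) in
def bplusQuotProj : B →ₗ[ℂ] BplusQuot A B R :=
  (R.comap (Bplus A B).subtype).mkQ ∘ₗ plusBc A B

lemma bplusQuotProj_mul (x y : B) :
    bplusQuotProj A B R (x * y)
      = bplusQuotMulRight hR y (bplusQuotProj A B R x) + epsB A B x • bplusQuotProj A B R y := by
  simp only [bplusQuotProj, comp_apply, Submodule.mkQ_apply, bplusQuotMulRight_mk,
    ← Submodule.Quotient.mk_smul, ← Submodule.Quotient.mk_add]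
  congr 1
  ext
  simp [plusBc, plusB_mul]

end RightIdealQuotient

variable (A : Type) [Ring A] [HopfAlgebra ℂ A] (B : Subalgebra ℂ A)
  (comulB : ↥B →ₗ[ℂ] A ⊗[ℂ] ↥B)

theorem exists_uniquely_equivariant_derivation_of_right_ideal
    (hcomulB : ∀ b : ↥B,
      (TensorProduct.map LinearMap.id B.val.toLinearMap) (comulB b)
        = Coalgebra.comul (b : A))
    (R : Submodule ℂ ↥B)
    (hR2 : ∀ x ∈ R, ∀ b ∈ Bplus A B, x * b ∈ R) :
    -- `Q = B⁺/R` and the formula `Φ a b = a b₍₁₎ ⊗ p(b₍₂₎⁺)`: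
    let Q := ↥(Bplus A B) ⧸ (R.comap (Bplus A B).subtype)
    let pQ : ↥B →ₗ[ℂ] Q := (R.comap (Bplus A B).subtype).mkQ ∘ₗ plusBc A B
    let Φ : ↥B → ↥B → A ⊗[ℂ] Q := fun a b =>
      (TensorProduct.map (LinearMap.mulLeft ℂ (a : A)) pQ) (comulB b)
    ∃ δ : BimodDeriv ↥B (A ⊗[ℂ] Q),
      (∀ a b : ↥B, δ.l a (δ.d b) = Φ a b) ∧
      (∀ c a b : ↥B, δ.l c (Φ a b) = Φ (c * a) b) ∧
      IsEquivariant A B comulB δ ∧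
      -- uniqueness: the formula determines the derivation on `Γ(δ_R)`
      (∀ δ' : BimodDeriv ↥B (A ⊗[ℂ] Q),
        (∀ a b : ↥B, δ'.l a (δ'.d b) = Φ a b) →
        ∀ L : List (↥B × ↥B),
          (L.map fun p => δ'.l p.1 (δ'.d p.2)).sum
            = (L.map fun p => δ.l p.1 (δ.d p.2)).sum) := by
  intro Q pQ Φ
  let δ := coactionDeriv hcomulB (bplusQuotMulRight hR2) (bplusQuotMulRight_mul hR2)
    (bplusQuotMulRight_one hR2) (bplusQuotProj A B R) (bplusQuotProj_mul hR2)
  have hΦ (a b : B) : δ.l a (δ.d b) = Φ a b := (map_mulLeft_apply _ _ _).symm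
  refine ⟨δ, hΦ, fun c a b => ?_, isEquivariant_coactionDeriv _ _ _ _ _ _, fun δ' h' L => ?_⟩
  · rw [← hΦ, ← hΦ, δ.l_mul]
  · simp only [h', hΦ]
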